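/- arXiv:2502.07214 — 3 statements merged into one kernel-verified Lean document; each statement's English description precedes it below -/
import Mathlib

section
/- Pruning lemma: let A and B be finite subsets of Fin k → ℝ≥0. Then the set of minimal elements of A ∪ B (with respect to the product order) equals the set of minimal elements of (minimal elements of A) ∪ (minimal elements of B). Hence pruning each Pareto table before merging does not change the resulting Pareto front. -/
open scoped NNReal

/-- The Pareto front: minimal elements of `S` w.r.t. the product order. -/
def paretoFront {k : ℕ} (S : Set (Fin k → ℝ≥0)) : Set (Fin k → ℝ≥0) :=
  {m | m ∈ S ∧ ¬ ∃ c ∈ S, c < m}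

theorem paretoFront_eq_setOf_minimal {k : ℕ} (S : Set (Fin k → ℝ≥0)) :
    paretoFront S = {m | Minimal (· ∈ S) m} := by
  ext m
  simp only [paretoFront, minimal_iff_forall_lt, Set.mem_ofPred_eq, not_exists, not_and]
  exact and_congr_right fun _ => ⟨fun h _ hlt hy => h _ hy hlt, fun h _ hy hlt => h hlt hy⟩

/-- Every element of a partially well-ordered set lies above one of its minimal elements, so the
minimal elements of `s` and of `t` are coinitial in `s ∪ t`. -/
theorem Set.IsPWO.setOf_minimal_union {α : Type*} [PartialOrder α] {s t : Set α}
    (hs : s.IsPWO) (ht : t.IsPWO) :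
    {x | Minimal (· ∈ s ∪ t) x} =
      {x | Minimal (· ∈ {y | Minimal (· ∈ s) y} ∪ {y | Minimal (· ∈ t) y}) x} := by
  ext x
  refine minimal_iff_minimal_of_imp_of_forall ?_ ?_
  · rintro y (hy | hy)
    exacts [Or.inl hy.prop, Or.inr hy.prop]
  · rintro y (hy | hy)
    · obtain ⟨z, hzy, hz⟩ := hs.exists_le_minimal hy
      exact ⟨z, hzy, Or.inl hz⟩
    · obtain ⟨z, hzy, hz⟩ := ht.exists_le_minimal hy
      exact ⟨z, hzy, Or.inr hz⟩

/-- pruning lemma: for finite sets `A`, `B` of multi-costs,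
the minimal elements of `A ∪ B` equal the minimal elements of
`(minimal elements of A) ∪ (minimal elements of B)`. -/
theorem paretoFront_union_prune {k : ℕ} (A B : Set (Fin k → ℝ≥0))
    (hA : A.Finite) (hB : B.Finite) :
    paretoFront (A ∪ B) = paretoFront (paretoFront A ∪ paretoFront B) := by
  simp only [paretoFront_eq_setOf_minimal]
  exact hA.isPWO.setOf_minimal_union hB.isPWO
end

section
/- Soundness of the Pareto tables: for every iteration ℓ : ℕ and every vertex v : V, every cost vector c ∈ D ℓ v is the cost of some walk from s to v with at most ℓ edges. -/
open scoped NNReal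

/-- A walk from `s` to `t`: a nonempty list of vertices starting at `s`,
ending at `t`, with `E u v` for every pair of consecutive vertices. -/
def IsWalk {V : Type*} (E : V → V → Prop) (s t : V) (l : List V) : Prop :=
  l ≠ [] ∧ l.head? = some s ∧ l.getLast? = some t ∧ l.Chain' E

/-- The multi-cost of a walk: componentwise sum of edge weights over
consecutive pairs of vertices (a walk with no edges has cost `0`). -/
def walkCost {V : Type*} {k : ℕ} (w : V → V → Fin k → ℝ≥0) (l : List V) :
    Fin k → ℝ≥0 :=
  ((l.zip l.tail).map fun p => w p.1 p.2).sum

section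

variable {V : Type*} {k : ℕ}

theorem walkCost_cons_cons (w : V → V → Fin k → ℝ≥0) (a b : V) (l : List V) :
    walkCost w (a :: b :: l) = w a b + walkCost w (b :: l) := by
  simp [walkCost]

theorem walkCost_concat (w : V → V → Fin k → ℝ≥0) {l : List V} {u : V}
    (hl : l.getLast? = some u) (v : V) :
    walkCost w (l ++ [v]) = walkCost w l + w u v := by
  induction l with
  | nil => simp at hl
  | cons a t ih =>
    cases t with
    | nil =>
      obtain rfl : a = u := by simpa using hl
      simp [walkCost]
    | cons b t =>
      rw [List.getLast?_cons_cons] at hl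
      rw [List.cons_append, List.cons_append, walkCost_cons_cons, ← List.cons_append, ih hl,
        walkCost_cons_cons, add_assoc]

theorem IsWalk.concat {E : V → V → Prop} {s u v : V} {l : List V} (hl : IsWalk E s u l)
    (huv : E u v) : IsWalk E s v (l ++ [v]) := by
  obtain ⟨hne, hhead, hlast, hchain⟩ := hl
  refine ⟨by simp, by rwa [List.head?_append_of_ne_nil _ hne], by simp, ?_⟩
  refine List.isChain_append.2 ⟨hchain, List.isChain_singleton v, ?_⟩
  simp_all

def walkCostsWithin (E : V → V → Prop) (w : V → V → Fin k → ℝ≥0) (s : V) (ℓ : ℕ) (v : V) :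
    Set (Fin k → ℝ≥0) :=
  {c | ∃ Q : List V, IsWalk E s v Q ∧ Q.length - 1 ≤ ℓ ∧ walkCost w Q = c}

variable {E : V → V → Prop} {w : V → V → Fin k → ℝ≥0} {s : V}

theorem zero_mem_walkCostsWithin (ℓ : ℕ) : 0 ∈ walkCostsWithin E w s ℓ s :=
  ⟨[s], ⟨by simp, rfl, rfl, List.isChain_singleton s⟩, by simp, by simp [walkCost]⟩

theorem walkCostsWithin_mono {ℓ ℓ' : ℕ} (h : ℓ ≤ ℓ') (v : V) :
    walkCostsWithin E w s ℓ v ⊆ walkCostsWithin E w s ℓ' v :=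
  fun _ ⟨Q, hQ, hlen, hcost⟩ => ⟨Q, hQ, hlen.trans h, hcost⟩

theorem add_mem_walkCostsWithin_succ {ℓ : ℕ} {u v : V} (huv : E u v) {c : Fin k → ℝ≥0}
    (hc : c ∈ walkCostsWithin E w s ℓ u) : c + w u v ∈ walkCostsWithin E w s (ℓ + 1) v := by
  obtain ⟨Q, hQ, hlen, rfl⟩ := hc
  refine ⟨Q ++ [v], hQ.concat huv, ?_, walkCost_concat w hQ.2.2.1 v⟩
  simp only [List.length_append, List.length_singleton]
  omega

theorem paretoFront_subset (S : Set (Fin k → ℝ≥0)) : paretoFront S ⊆ S :=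
  fun _ hm => hm.1

end

theorem paretoTable_sound_general {V : Type*}
    (E : V → V → Prop) {k : ℕ} (w : V → V → Fin k → ℝ≥0)
    (s : V) (D : ℕ → V → Set (Fin k → ℝ≥0))
    (hD0s : D 0 s = {0})
    (hD0 : ∀ v : V, v ≠ s → D 0 v = ∅)
    (hDstep : ∀ (ℓ : ℕ) (v : V), D (ℓ + 1) v =
      paretoFront (D ℓ v ∪ {x | ∃ u : V, E u v ∧ ∃ c ∈ D ℓ u, x = c + w u v})) :
    ∀ (ℓ : ℕ) (v : V), ∀ c ∈ D ℓ v,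
      ∃ Q : List V, IsWalk E s v Q ∧ Q.length - 1 ≤ ℓ ∧ walkCost w Q = c := by
  suffices h : ∀ ℓ v, D ℓ v ⊆ walkCostsWithin E w s ℓ v from h
  intro ℓ
  induction ℓ with
  | zero =>
    intro v
    by_cases hv : v = s
    · subst hv
      simpa [hD0s] using zero_mem_walkCostsWithin 0
    · simp [hD0 v hv]
  | succ ℓ ih =>
    intro v c hc
    rcases paretoFront_subset _ (hDstep ℓ v ▸ hc) with hkept | ⟨u, huv, c', hc', rfl⟩
    · exact walkCostsWithin_mono ℓ.le_succ v (ih v hkept)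
    · exact add_mem_walkCostsWithin_succ huv (ih u hc')

/-- soundness of the Pareto tables: every cost vector in
`D ℓ v` is the cost of some walk from `s` to `v` with at most `ℓ` edges. -/
theorem paretoTable_sound {V : Type*} [Fintype V]
    (E : V → V → Prop) [DecidableRel E] {k : ℕ} (w : V → V → Fin k → ℝ≥0)
    (s : V) (D : ℕ → V → Set (Fin k → ℝ≥0))
    (hD0s : D 0 s = {0})
    (hD0 : ∀ v : V, v ≠ s → D 0 v = ∅)
    (hDstep : ∀ (ℓ : ℕ) (v : V), D (ℓ + 1) v =
      paretoFront (D ℓ v ∪ {x | ∃ u : V, E u v ∧ ∃ c ∈ D ℓ u, x = c + w u v})) :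
    ∀ (ℓ : ℕ) (v : V), ∀ c ∈ D ℓ v,
      ∃ Q : List V, IsWalk E s v Q ∧ Q.length - 1 ≤ ℓ ∧ walkCost w Q = c :=
  paretoTable_sound_general E w s D hD0s hD0 hDstep
end

section
/- Correctness of the sorted scan for two criteria: let L be a list of points in ℝ≥0 × ℝ≥0 that is sorted in strictly increasing lexicographic order. Then a point p in L is a minimal element of the set of points of L with respect to the product order (i.e., no q in L satisfies q.1 ≤ p.1, q.2 ≤ p.2, and q ≠ p) if and only if every point q occurring strictly before p in L satisfies p.2 < q.2. -/
open scoped NNReal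

theorem Prod.lt_iff_snd_le_of_toLex_lt {α β : Type*} [Preorder α] [Preorder β] {p q : α × β}
    (hqp : toLex q < toLex p) : q < p ↔ q.2 ≤ p.2 := by
  refine ⟨fun h => h.le.2, fun h₂ => Prod.lt_iff.mpr ?_⟩
  rcases Prod.Lex.toLex_lt_toLex.mp hqp with h₁ | ⟨h₁, h₂'⟩
  · exact Or.inl ⟨h₁, h₂⟩
  · exact Or.inr ⟨h₁.le, h₂'⟩

theorem List.Pairwise.exists_lt_get_eq_or_rel {α : Type*} {R : α → α → Prop} {L : List α}
    (hL : L.Pairwise R) (j : Fin L.length) {q : α} (hq : q ∈ L) :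
    (∃ i < j, L.get i = q) ∨ q = L.get j ∨ R (L.get j) q := by
  obtain ⟨i, rfl⟩ := List.mem_iff_get.mp hq
  rcases lt_trichotomy i j with h | rfl | h
  · exact Or.inl ⟨i, h, rfl⟩
  · exact Or.inr (Or.inl rfl)
  · exact Or.inr (Or.inr (hL.rel_get_of_lt h))

/-- In a lexicographically sorted list, an earlier point cannot lie above a later one in the
product order, and lies below it as soon as its second coordinate does. -/
theorem minimal_mem_iff_forall_earlier_snd_lt {α β : Type*} [PartialOrder α] [LinearOrder β]
    {L : List (α × β)} (hL : L.Pairwise fun q p => toLex q < toLex p) {p : α × β} (hp : p ∈ L) :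
    Minimal (· ∈ L) p ↔ ∀ i j : Fin L.length, i < j → L.get j = p → p.2 < (L.get i).2 := by
  rw [minimal_iff_forall_lt, and_iff_right hp]
  constructor
  · rintro hmin i j hij rfl
    by_contra! hle
    exact hmin ((Prod.lt_iff_snd_le_of_toLex_lt (hL.rel_get_of_lt hij)).mpr hle) (L.get_mem i)
  · rintro hscan q hqp hq
    obtain ⟨j, rfl⟩ := List.mem_iff_get.mp hp
    rcases hL.exists_lt_get_eq_or_rel j hq with ⟨i, hij, rfl⟩ | rfl | hlex
    · exact (hscan i j hij rfl).not_ge hqp.le.2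
    · exact hqp.false
    · exact hlex.asymm (Prod.Lex.toLex_strictMono hqp)

/-- correctness of the sorted scan for two criteria: in a list
of points sorted in strictly increasing lexicographic order, a point `p` of
the list is minimal in the product order among the points of the list iff
every point occurring strictly before `p` has second coordinate strictly
greater than `p.2`. -/
theorem sorted_scan_correct (L : List (ℝ≥0 × ℝ≥0))
    (hsort : L.Pairwise fun q p : ℝ≥0 × ℝ≥0 =>
      q.1 < p.1 ∨ (q.1 = p.1 ∧ q.2 < p.2))
    (p : ℝ≥0 × ℝ≥0) (hp : p ∈ L) :
    (¬ ∃ q ∈ L, q.1 ≤ p.1 ∧ q.2 ≤ p.2 ∧ q ≠ p) ↔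
    (∀ i j : Fin L.length, i < j → L.get j = p → p.2 < (L.get i).2) := by
  have hlex : L.Pairwise fun q p => toLex q < toLex p :=
    hsort.imp Prod.Lex.toLex_lt_toLex.mpr
  rw [← minimal_mem_iff_forall_earlier_snd_lt hlex hp, minimal_iff_forall_lt]
  simp only [hp, true_and, lt_iff_le_and_ne, Prod.le_def]
  grind
end
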